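/- Let N be a positive even integer and set N† = 2N. Let Δx > 0 and C ≥ 0 be real numbers. Let g̃ : ℤ → ℝ be N†-periodic, i.e. g̃(ℓ + N†) = g̃(ℓ) for all ℓ ∈ ℤ. Let u : ℤ → ℝ satisfy |u(ℓ)| ≤ C for all ℓ ∈ {−N†/2, …, N†/2 − 1}. Define e_wrap = max over m ∈ {−N/2, …, N/2 − 1} of Δx · ∑_{ℓ = −N†/2}^{N†/2 − 1} |g̃(m − ℓ) · u(ℓ)| · 1{ (m − ℓ) < −N†/2 or (m − ℓ) > N†/2 − 1 }. Then e_wrap ≤ C · Δx · ∑_{ℓ ∈ (S† − S)} |g̃(ℓ)|, where S† − S = {−N†/2, …, −N/2 − 1} ∪ {N/2, …, N†/2 − 1}. -/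
import Mathlib


/-- Key intermediate bound for the one-dimensional wrap-around error:
the wrap-around error of a single convolution step is bounded by
`C * Δx` times the sum of `|g̃|` over the padded index region `S† − S`. -/
theorem wrap_around_error_1d_single_step
    (N : ℤ) (hN : 0 < N) (hNeven : Even N)
    (Δx C : ℝ) (hΔx : 0 < Δx) (hC : 0 ≤ C)
    (g : ℤ → ℝ) (hper : ∀ ℓ : ℤ, g (ℓ + 2 * N) = g ℓ)
    (u : ℤ → ℝ)
    (hu : ∀ ℓ ∈ Finset.Icc (-N) (N - 1), |u ℓ| ≤ C)
    (ewrap : ℝ)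
    (hewrap : ewrap =
      (Finset.Icc (-(N / 2)) (N / 2 - 1)).sup'
        (Finset.nonempty_Icc.mpr (by obtain ⟨k, hk⟩ := hNeven; omega))
        (fun m => Δx * ∑ ℓ ∈ Finset.Icc (-N) (N - 1),
          (if m - ℓ < -N ∨ N - 1 < m - ℓ then |g (m - ℓ) * u ℓ| else 0))) :
    ewrap ≤ C * Δx *
      ∑ ℓ ∈ Finset.Icc (-N) (-(N / 2) - 1) ∪ Finset.Icc (N / 2) (N - 1), |g ℓ| := by
  subst hewrap
  obtain ⟨k, hk⟩ := hNeven
  apply Finset.sup'_le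
  intro m hm
  simp only [Finset.mem_Icc] at hm
  set U := Finset.Icc (-N) (-(N / 2) - 1) ∪ Finset.Icc (N / 2) (N - 1) with hU
  have key : (∑ ℓ ∈ Finset.Icc (-N) (N - 1),
      (if m - ℓ < -N ∨ N - 1 < m - ℓ then |g (m - ℓ) * u ℓ| else 0)) ≤
      C * ∑ ℓ ∈ U, |g ℓ| := by
    set T := (Finset.Icc (-N) (N - 1)).filter
      (fun ℓ => m - ℓ < -N ∨ N - 1 < m - ℓ) with hT
    have step1 : (∑ ℓ ∈ Finset.Icc (-N) (N - 1),
        (if m - ℓ < -N ∨ N - 1 < m - ℓ then |g (m - ℓ) * u ℓ| else 0)) =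
        ∑ ℓ ∈ T, |g (m - ℓ) * u ℓ| := by
      rw [hT, Finset.sum_filter]
    rw [step1]
    set f : ℤ → ℤ := fun ℓ => if m - ℓ < -N then m - ℓ + 2 * N else m - ℓ - 2 * N with hf
    have hmem : ∀ ℓ ∈ T, f ℓ ∈ U := by
      intro ℓ hℓ
      simp only [hT, Finset.mem_filter, Finset.mem_Icc] at hℓ
      simp only [hU, hf, Finset.mem_union, Finset.mem_Icc]
      by_cases h : m - ℓ < -N
      · simp only [if_pos h]; right; omega
      · simp only [if_neg h]; left; omega
    have hinj : ∀ a ∈ T, ∀ b ∈ T, f a = f b → a = b := by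
      intro a ha b hb hab
      simp only [hT, Finset.mem_filter, Finset.mem_Icc] at ha hb
      simp only [hf] at hab
      by_cases h1 : m - a < -N <;> by_cases h2 : m - b < -N <;>
        simp [h1, h2] at hab <;> omega
    have hval : ∀ ℓ ∈ T, |g (m - ℓ) * u ℓ| ≤ C * |g (f ℓ)| := by
      intro ℓ hℓ
      simp only [hT, Finset.mem_filter] at hℓ
      have hgf : g (f ℓ) = g (m - ℓ) := by
        simp only [hf]
        by_cases h : m - ℓ < -N
        · simp only [if_pos h]; exact hper (m - ℓ)
        · simp only [if_neg h]
          have := hper (m - ℓ - 2 * N)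
          simpa using this.symm
      rw [hgf, abs_mul, mul_comm]
      exact mul_le_mul_of_nonneg_right (hu ℓ hℓ.1) (abs_nonneg _)
    calc (∑ ℓ ∈ T, |g (m - ℓ) * u ℓ|) ≤ ∑ ℓ ∈ T, C * |g (f ℓ)| :=
          Finset.sum_le_sum hval
      _ = C * ∑ ℓ ∈ T, |g (f ℓ)| := by rw [Finset.mul_sum]
      _ = C * ∑ ℓ ∈ T.image f, |g ℓ| := by rw [Finset.sum_image hinj]
      _ ≤ C * ∑ ℓ ∈ U, |g ℓ| := by
          apply mul_le_mul_of_nonneg_left _ hC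
          apply Finset.sum_le_sum_of_subset_of_nonneg
          · intro x hx
            obtain ⟨a, ha, rfl⟩ := Finset.mem_image.mp hx
            exact hmem a ha
          · intro _ _ _; exact abs_nonneg _
  calc Δx * (∑ ℓ ∈ Finset.Icc (-N) (N - 1),
        (if m - ℓ < -N ∨ N - 1 < m - ℓ then |g (m - ℓ) * u ℓ| else 0)) ≤
        Δx * (C * ∑ ℓ ∈ U, |g ℓ|) := mul_le_mul_of_nonneg_left key hΔx.le
    _ = C * Δx * ∑ ℓ ∈ U, |g ℓ| := by ring
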